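/- Fix γ > 0. For i = 1,2 let F_{i0} be distributions on [0,∞) and define F_{iγ} by (F_{iγ})̄(x) = e^{-γx}(F_{i0})̄(x) for x ≥ 0 (and 1 for x < 0). If for i = 1,2 and all t > 0, |(F_{i0})̄(x-t) - (F_{i0})̄(x)| = o((F_{10}*F_{20})̄(x)) as x → ∞, then for i = 1,2 and all t > 0, |(F_{iγ})̄(x-t) - e^{γt}(F_{iγ})̄(x)| = o((F_{1γ}*F_{2γ})̄(x)) as x → ∞. -/

import Mathlib

/-!
For `x ≥ 0` the damped convolution tail dominates the undamped one:
`e^{-γx} (F₁₀ * F₂₀)̄(x) ≤ (F₁γ * F₂γ)̄(x)`. Splitting `{a + b > x}` according to `a > x` or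
`a ≤ x`, the first part contributes `e^{-γx} F̄₁₀(x) = F̄₁γ(x)` on both sides, and on the second
part `e^{-γx} F̄₂₀(x - a) = e^{-γa} F̄₂γ(x - a)`, so it remains to compare the measure
`e^{-γa} F₁₀(da)` with `F₁γ` against the increasing function `a ↦ F̄₂γ(x - a)` on `(-∞, x]`.
By Tonelli this reduces to the intervals `(c, x]`, where the damped measure is smaller because
its density is at most `e^{-γ max(c, 0)}` there. Finally, for `x ≥ t`,
`F̄ᵢγ(x - t) - e^{γt} F̄ᵢγ(x) = e^{γt} e^{-γx} (F̄ᵢ₀(x - t) - F̄ᵢ₀(x))`, so the little-o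
hypothesis transfers.
-/

open MeasureTheory Filter Set Asymptotics

/-- The tail `F̄(x) = μ((x,∞))` of a distribution `μ` on `ℝ`. -/
noncomputable def tail (μ : MeasureTheory.Measure ℝ) (x : ℝ) : ℝ := (μ (Set.Ioi x)).toReal

/-- Convolution of two distributions on `ℝ`. -/
noncomputable def mconv (μ ν : MeasureTheory.Measure ℝ) : MeasureTheory.Measure ℝ :=
  MeasureTheory.Measure.map (fun p : ℝ × ℝ => p.1 + p.2) (μ.prod ν)

/-- `iconv μ k` is the `k`-fold convolution `μ^{*k}` (with `μ^{*0} = δ₀`). -/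
noncomputable def iconv (μ : MeasureTheory.Measure ℝ) : ℕ → MeasureTheory.Measure ℝ
  | 0 => MeasureTheory.Measure.dirac 0
  | n + 1 => mconv (iconv μ n) μ

/-- The class `L(γ)`: `F̄(x-t) ~ e^{γt} F̄(x)` as `x → ∞`, for every `t`. -/
def MemL (γ : ℝ) (μ : MeasureTheory.Measure ℝ) : Prop :=
  ∀ t : ℝ, Filter.Tendsto (fun x => tail μ (x - t) / tail μ x) Filter.atTop
    (nhds (Real.exp (γ * t)))

/-- The class `OS`: `limsup_{x→∞} (F*F)̄(x) / F̄(x) < ∞`. -/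
def MemOS (μ : MeasureTheory.Measure ℝ) : Prop :=
  Filter.IsBoundedUnder (· ≤ ·) Filter.atTop (fun x => tail (mconv μ μ) x / tail μ x)

lemma mconv_eq_conv (μ ν : Measure ℝ) : mconv μ ν = μ ∗ ν := rfl

lemma tail_nonneg (μ : Measure ℝ) (x : ℝ) : 0 ≤ tail μ x := ENNReal.toReal_nonneg

lemma measure_Ioi_eq_ofReal_tail (μ : Measure ℝ) [IsFiniteMeasure μ] (x : ℝ) :
    μ (Ioi x) = ENNReal.ofReal (tail μ x) :=
  (ENNReal.ofReal_toReal (measure_ne_top μ _)).symm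

lemma measure_Ioc_eq_ofReal_tail_sub (μ : Measure ℝ) [IsFiniteMeasure μ] {c x : ℝ}
    (hcx : c ≤ x) : μ (Ioc c x) = ENNReal.ofReal (tail μ c - tail μ x) := by
  rw [← Ioi_sdiff_Ioi, measure_sdiff (Ioi_subset_Ioi hcx) measurableSet_Ioi.nullMeasurableSet
    (measure_ne_top _ _), measure_Ioi_eq_ofReal_tail, measure_Ioi_eq_ofReal_tail]
  exact (ENNReal.ofReal_sub _ ENNReal.toReal_nonneg).symm

lemma measure_Ioi_eq_one_of_neg {μ : Measure ℝ} [IsProbabilityMeasure μ] (hμ : μ (Iio 0) = 0)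
    {x : ℝ} (hx : x < 0) : μ (Ioi x) = 1 := by
  rw [← prob_compl_eq_zero_iff measurableSet_Ioi, compl_Ioi]
  exact measure_mono_null (Iic_subset_Iio.mpr hx) hμ

lemma conv_apply_Ioi (μ ν : Measure ℝ) [SFinite ν] (x : ℝ) :
    (μ ∗ ν) (Ioi x) = ∫⁻ a, ν (Ioi (x - a)) ∂μ := by
  rw [Measure.conv, Measure.map_apply (by fun_prop) measurableSet_Ioi,
    Measure.prod_apply (measurableSet_Ioi.preimage (by fun_prop))]
  congr! with a
  ext b
  simp [sub_lt_iff_lt_add']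

lemma conv_apply_Ioi_eq_setLIntegral_add (μ ν : Measure ℝ) [SFinite ν]
    (hν : ∀ y < 0, ν (Ioi y) = 1) (x : ℝ) :
    (μ ∗ ν) (Ioi x) = ∫⁻ a in Iic x, ν (Ioi (x - a)) ∂μ + μ (Ioi x) := by
  rw [conv_apply_Ioi, ← lintegral_add_compl _ measurableSet_Iic, compl_Iic,
    setLIntegral_congr_fun measurableSet_Ioi (g := fun _ => 1)
      (fun a ha => hν _ (sub_neg.mpr ha)), setLIntegral_one]

lemma setLIntegral_Iic_measure_Ioi_sub (μ ρ : Measure ℝ) [SFinite μ] [SFinite ρ] (x : ℝ) :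
    ∫⁻ a in Iic x, ρ (Ioi (x - a)) ∂μ = ∫⁻ b, μ (Ioc (x - b) x) ∂ρ := by
  rw [← conv_apply_Ioi, Measure.conv_comm, conv_apply_Ioi]
  simp_rw [Measure.restrict_apply measurableSet_Ioi, Ioi_inter_Iic]

lemma setLIntegral_Iic_measure_Ioi_sub_mono {μ ν : Measure ℝ} [SFinite μ] [SFinite ν]
    (ρ : Measure ℝ) [SFinite ρ] {x : ℝ} (h : ∀ c, μ (Ioc c x) ≤ ν (Ioc c x)) :
    ∫⁻ a in Iic x, ρ (Ioi (x - a)) ∂μ ≤ ∫⁻ a in Iic x, ρ (Ioi (x - a)) ∂ν := by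
  simp_rw [setLIntegral_Iic_measure_Ioi_sub]
  exact lintegral_mono fun b => h _

noncomputable abbrev expDamp (γ : ℝ) (μ : Measure ℝ) : Measure ℝ :=
  μ.withDensity fun a => ENNReal.ofReal (Real.exp (-(γ * a)))

section ExpDamp

variable {γ : ℝ} {μ₀ μ : Measure ℝ} [IsFiniteMeasure μ₀] [IsFiniteMeasure μ]
  (hμ₀ : μ₀ (Iio 0) = 0) (ht : ∀ c, tail μ c = Real.exp (-(γ * max c 0)) * tail μ₀ c)

include ht in
lemma measure_Ioi_eq_ofReal_exp_mul {y : ℝ} (hy : 0 ≤ y) :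
    μ (Ioi y) = ENNReal.ofReal (Real.exp (-(γ * y))) * μ₀ (Ioi y) := by
  rw [measure_Ioi_eq_ofReal_tail, measure_Ioi_eq_ofReal_tail, ht, max_eq_left hy,
    ENNReal.ofReal_mul (Real.exp_nonneg _)]

include hμ₀ ht in
lemma expDamp_apply_Ioc_le (hγ : 0 ≤ γ) {x : ℝ} (hx : 0 ≤ x) (c : ℝ) :
    expDamp γ μ₀ (Ioc c x) ≤ μ (Ioc c x) := by
  rcases le_or_gt x c with hxc | hcx
  · simp [Ioc_eq_empty_of_le hxc]
  have hcx' : max c 0 ≤ x := max_le hcx.le hx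
  have hdamp : expDamp γ μ₀ (Ioc c x)
      ≤ ENNReal.ofReal (Real.exp (-(γ * max c 0))) * μ₀ (Ioc c x) := by
    rw [expDamp, withDensity_apply _ measurableSet_Ioc, ← setLIntegral_const]
    refine setLIntegral_mono_ae' measurableSet_Ioc ?_
    filter_upwards [measure_eq_zero_iff_ae_notMem.mp hμ₀] with a ha hac
    have hca : max c 0 ≤ a := max_le hac.1.le (not_lt.mp ha)
    gcongr
  refine hdamp.trans ?_
  rw [measure_Ioc_eq_ofReal_tail_sub _ hcx.le, measure_Ioc_eq_ofReal_tail_sub _ hcx.le,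
    ← ENNReal.ofReal_mul (Real.exp_nonneg _), ht c, ht x, max_eq_left hx]
  refine ENNReal.ofReal_le_ofReal ?_
  have hexp : Real.exp (-(γ * x)) ≤ Real.exp (-(γ * max c 0)) := by gcongr
  nlinarith [tail_nonneg μ₀ x]

end ExpDamp

lemma ofReal_exp_mul_setLIntegral_Iic_eq {γ : ℝ} {μ₁ μ₂ ν₂ : Measure ℝ} [IsFiniteMeasure μ₂]
    [IsFiniteMeasure ν₂] (hμ₁ : μ₁ (Iio 0) = 0)
    (ht₂ : ∀ c, tail ν₂ c = Real.exp (-(γ * max c 0)) * tail μ₂ c) (x : ℝ) :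
    ENNReal.ofReal (Real.exp (-(γ * x))) * ∫⁻ a in Iic x, μ₂ (Ioi (x - a)) ∂μ₁
      = ∫⁻ a in Iic x, ν₂ (Ioi (x - a)) ∂expDamp γ μ₁ := by
  rw [expDamp, setLIntegral_withDensity_eq_setLIntegral_mul_non_measurable _ (by fun_prop) _
    measurableSet_Iic (ae_of_all _ fun _ => ENNReal.ofReal_lt_top), ← lintegral_const_mul' _ _
    ENNReal.ofReal_ne_top]
  refine setLIntegral_congr_fun_ae measurableSet_Iic ?_
  filter_upwards [measure_eq_zero_iff_ae_notMem.mp hμ₁] with a ha hax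
  rw [Pi.mul_apply, measure_Ioi_eq_ofReal_exp_mul ht₂ (sub_nonneg.mpr hax), ← mul_assoc,
    ← ENNReal.ofReal_mul (Real.exp_nonneg _), ← Real.exp_add]
  ring_nf

lemma ofReal_exp_mul_conv_apply_Ioi_le {γ : ℝ} (hγ : 0 ≤ γ) {μ₁ μ₂ ν₁ ν₂ : Measure ℝ}
    [IsFiniteMeasure μ₁] [IsProbabilityMeasure μ₂] [IsFiniteMeasure ν₁] [IsFiniteMeasure ν₂]
    (hμ₁ : μ₁ (Iio 0) = 0) (hμ₂ : μ₂ (Iio 0) = 0)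
    (ht₁ : ∀ c, tail ν₁ c = Real.exp (-(γ * max c 0)) * tail μ₁ c)
    (ht₂ : ∀ c, tail ν₂ c = Real.exp (-(γ * max c 0)) * tail μ₂ c) {x : ℝ} (hx : 0 ≤ x) :
    ENNReal.ofReal (Real.exp (-(γ * x))) * (μ₁ ∗ μ₂) (Ioi x) ≤ (ν₁ ∗ ν₂) (Ioi x) := by
  have hν₂ : ∀ y < 0, ν₂ (Ioi y) = 1 := fun y hy => by
    rw [measure_Ioi_eq_ofReal_tail, ht₂, max_eq_right hy.le, mul_zero, neg_zero, Real.exp_zero,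
      one_mul, ← measure_Ioi_eq_ofReal_tail, measure_Ioi_eq_one_of_neg hμ₂ hy]
  rw [conv_apply_Ioi_eq_setLIntegral_add _ _ (fun y hy => measure_Ioi_eq_one_of_neg hμ₂ hy),
    conv_apply_Ioi_eq_setLIntegral_add _ _ hν₂, mul_add, ofReal_exp_mul_setLIntegral_Iic_eq hμ₁ ht₂,
    ← measure_Ioi_eq_ofReal_exp_mul ht₁ hx]
  gcongr 1
  exact setLIntegral_Iic_measure_Ioi_sub_mono _ (expDamp_apply_Ioc_le hμ₁ ht₁ hγ hx)

lemma exp_mul_tail_conv_le {γ : ℝ} (hγ : 0 ≤ γ) {μ₁ μ₂ ν₁ ν₂ : Measure ℝ}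
    [IsFiniteMeasure μ₁] [IsProbabilityMeasure μ₂] [IsFiniteMeasure ν₁] [IsFiniteMeasure ν₂]
    (hμ₁ : μ₁ (Iio 0) = 0) (hμ₂ : μ₂ (Iio 0) = 0)
    (ht₁ : ∀ c, tail ν₁ c = Real.exp (-(γ * max c 0)) * tail μ₁ c)
    (ht₂ : ∀ c, tail ν₂ c = Real.exp (-(γ * max c 0)) * tail μ₂ c) {x : ℝ} (hx : 0 ≤ x) :
    Real.exp (-(γ * x)) * tail (mconv μ₁ μ₂) x ≤ tail (mconv ν₁ ν₂) x := by
  have h := ENNReal.toReal_mono (measure_ne_top _ _)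
    (ofReal_exp_mul_conv_apply_Ioi_le hγ hμ₁ hμ₂ ht₁ ht₂ hx)
  rw [mconv_eq_conv, mconv_eq_conv]
  rwa [ENNReal.toReal_mul, ENNReal.toReal_ofReal (Real.exp_nonneg _)] at h

lemma tail_eq_exp_max_mul {γ : ℝ} {μ₀ μ : Measure ℝ} [IsProbabilityMeasure μ₀]
    (hμ₀ : μ₀ (Iio 0) = 0) (ht : ∀ x : ℝ, 0 ≤ x → tail μ x = Real.exp (-(γ * x)) * tail μ₀ x)
    (ht' : ∀ x : ℝ, x < 0 → tail μ x = 1) (c : ℝ) :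
    tail μ c = Real.exp (-(γ * max c 0)) * tail μ₀ c := by
  rcases le_or_gt 0 c with hc | hc
  · rw [max_eq_left hc, ht c hc]
  · rw [max_eq_right hc.le, ht' c hc, tail, measure_Ioi_eq_one_of_neg hμ₀ hc]
    simp

lemma isLittleO_abs_sub_exp_mul {γ t : ℝ} {T T' C C' : ℝ → ℝ}
    (hT : ∀ x, 0 ≤ x → T' x = Real.exp (-(γ * x)) * T x)
    (hC : (fun x => Real.exp (-(γ * x)) * C x) =O[atTop] C')
    (ho : (fun x => |T (x - t) - T x|) =o[atTop] C) :
    (fun x => |T' (x - t) - Real.exp (γ * t) * T' x|) =o[atTop] C' := by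
  have h := (((isBigO_refl (fun x => Real.exp (-(γ * x))) atTop).mul_isLittleO ho).trans_isBigO
    hC).const_mul_left (Real.exp (γ * t))
  refine h.congr' ?_ EventuallyEq.rfl
  filter_upwards [eventually_ge_atTop t, eventually_ge_atTop 0] with x hxt hx
  have hfactor : Real.exp (-(γ * (x - t))) * T (x - t)
      - Real.exp (γ * t) * (Real.exp (-(γ * x)) * T x) = Real.exp (γ * t) * (Real.exp (-(γ * x)) * (T (x - t) - T x)) := by
    rw [show -(γ * (x - t)) = γ * t + -(γ * x) by ring, Real.exp_add]
    ring
  rw [hT _ (sub_nonneg.mpr hxt), hT x hx, hfactor, abs_mul, abs_mul,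
    abs_of_pos (Real.exp_pos _), abs_of_pos (Real.exp_pos _)]

theorem stmt13 (γ : ℝ) (hγ : 0 < γ) (F10 F20 F1γ F2γ : Measure ℝ)
    [IsProbabilityMeasure F10] [IsProbabilityMeasure F20]
    [IsProbabilityMeasure F1γ] [IsProbabilityMeasure F2γ]
    (hs1 : F10 (Set.Iio 0) = 0) (hs2 : F20 (Set.Iio 0) = 0)
    (ht1 : ∀ x : ℝ, 0 ≤ x → tail F1γ x = Real.exp (-(γ * x)) * tail F10 x)
    (ht1' : ∀ x : ℝ, x < 0 → tail F1γ x = 1)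
    (ht2 : ∀ x : ℝ, 0 ≤ x → tail F2γ x = Real.exp (-(γ * x)) * tail F20 x)
    (ht2' : ∀ x : ℝ, x < 0 → tail F2γ x = 1)
    (ho : ∀ t > (0 : ℝ),
      ((fun x => |tail F10 (x - t) - tail F10 x|) =o[Filter.atTop]
        fun x => tail (mconv F10 F20) x) ∧
      ((fun x => |tail F20 (x - t) - tail F20 x|) =o[Filter.atTop]
        fun x => tail (mconv F10 F20) x)) :
    ∀ t > (0 : ℝ),
      ((fun x => |tail F1γ (x - t) - Real.exp (γ * t) * tail F1γ x|) =o[Filter.atTop]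
        fun x => tail (mconv F1γ F2γ) x) ∧
      ((fun x => |tail F2γ (x - t) - Real.exp (γ * t) * tail F2γ x|) =o[Filter.atTop]
        fun x => tail (mconv F1γ F2γ) x) := by
  intro t ht
  have hconv : (fun x => Real.exp (-(γ * x)) * tail (mconv F10 F20) x)
      =O[atTop] tail (mconv F1γ F2γ) := by
    refine IsBigO.of_bound' ?_
    filter_upwards [eventually_ge_atTop 0] with x hx
    rw [Real.norm_of_nonneg (mul_nonneg (Real.exp_nonneg _) (tail_nonneg _ _)),
      Real.norm_of_nonneg (tail_nonneg _ _)]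
    exact exp_mul_tail_conv_le hγ.le hs1 hs2 (tail_eq_exp_max_mul hs1 ht1 ht1')
      (tail_eq_exp_max_mul hs2 ht2 ht2') hx
  exact ⟨isLittleO_abs_sub_exp_mul ht1 hconv (ho t ht).1,
    isLittleO_abs_sub_exp_mul ht2 hconv (ho t ht).2⟩
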